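/- Suppose α > ᾱ := (n-1)ℓ√(-k)/(p-1), where -ℓ is the minimum of cos_p^{(p-1)}·sin_p on (-π_p/2,0). Then there is ε > 0 such that the solution φ of φ' = α + ((n-1)√(-k)/(p-1))·cos_p^{(p-1)}(φ)·sin_p(φ), φ(0) = -π_p/2, satisfies φ' ≥ ε everywhere; consequently φ is strictly increasing, tends to +∞, and the first time b with φ(b) = π_p/2 satisfies b ≤ π_p/ε < ∞. -/

import Mathlib

open Real Set Filter MeasureTheory

/-- The signed power `x^{(q)} := |x|^{q-?}`; here `spow x q = |x|^q · sign x`,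
so that `x^{(p-1)} = |x|^{p-2}·x = spow x (p-1)`. -/
noncomputable def spow (x q : ℝ) : ℝ := Real.sign x * |x| ^ q

/-- The generalized half-period `π_p = ∫_{-1}^1 (1-|s|^p)^{-1/p} ds`. -/
noncomputable def pip (p : ℝ) : ℝ := ∫ s in (-1:ℝ)..1, (1 - |s| ^ p) ^ (-1/p)

/-- `sinp` and `cosp` are the generalized p-trigonometric functions:
on `[-π_p/2, π_p/2]` the function `sinp` is defined implicitly by
`t = ∫_0^{sinp t} (1-|s|^p)^{-1/p} ds`, it satisfies the reflection rule
`sinp t = sinp (π_p - t)` on `[π_p/2, 3π_p/2]`, is `2π_p`-periodic, and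
`cosp` is its derivative. -/
def IsPTrig (p : ℝ) (sinp cosp : ℝ → ℝ) : Prop :=
  (∀ t ∈ Set.Icc (-(pip p)/2) (pip p/2),
      t = ∫ s in (0:ℝ)..(sinp t), (1 - |s| ^ p) ^ (-1/p)) ∧
  (∀ t ∈ Set.Icc (pip p/2) (3 * pip p/2), sinp t = sinp (pip p - t)) ∧
  (∀ t, sinp (t + 2 * pip p) = sinp t) ∧
  (∀ t, HasDerivAt sinp (cosp t) t)

/-!
Everything rests on the bound `cos_p^{(p-1)}(ψ) sin_p(ψ) ≥ -ℓ` for all `ψ`: with it the right-hand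
side of the equation is at least `ε := α - (n-1)ℓ√(-k)/(p-1) > 0`, so `φ` grows at least linearly.

By periodicity and the reflection `sin_p(π_p - t) = sin_p t` it suffices to bound the product on
`J = (-π_p/2, π_p/2)`, where `sin_p` inverts `F(y) = ∫_0^y (1-|s|^p)^{-1/p} ds`, hence
`cos_p = 1/F'(sin_p)`. If `|sin_p| < 1` on `J`, then `sin_p` is odd and increasing there and
`cos_p > 0`, and the bound follows from the definition of `ℓ` on `(-π_p/2, 0)` by oddness.

The catch is that `Real.rpow` of a negative base `x` is `|x|^y cos(πy)`, not junk zero: for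
`|s| > 1` the integrand is `(|s|^p-1)^{-1/p} cos(π/p)`, so a priori `sin_p` could stay outside
`[-1,1]` on all of `J` (it never takes the values `±1` there). If `cos(π/p) ≥ 0` this contradicts
`F(sin_p 0) = 0`, since `|F| ≥ π_p/2` outside `(-1,1)`; if `cos(π/p) < 0`, then
`-cos_p^{(p-1)} sin_p` is strictly decreasing on `J` and cannot attain its maximum `ℓ` on
`(-π_p/2, 0)`.
-/

lemma abs_rpow_le_norm_rpow_add_norm_neg_rpow (x r : ℝ) : |x| ^ r ≤ ‖x ^ r‖ + ‖(-x) ^ r‖ := by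
  rcases le_total 0 x with hx | hx
  · rw [abs_of_nonneg hx, Real.norm_of_nonneg (rpow_nonneg hx r)]
    linarith [norm_nonneg ((-x) ^ r)]
  · rw [abs_of_nonpos hx, Real.norm_of_nonneg (rpow_nonneg (neg_nonneg.2 hx) r)]
    linarith [norm_nonneg (x ^ r)]

lemma intervalIntegrable_abs_rpow {r : ℝ} (hr : -1 < r) (a b : ℝ) :
    IntervalIntegrable (fun x => |x| ^ r) volume a b := by
  have hpos := intervalIntegral.intervalIntegrable_rpow' (a := a) (b := b) hr
  have hneg : IntervalIntegrable (fun x : ℝ => (-x) ^ r) volume a b := by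
    simpa using (IntervalIntegrable.iff_comp_neg (f := fun x : ℝ => x ^ r)).1
      (intervalIntegral.intervalIntegrable_rpow' (a := -a) (b := -b) hr)
  have hmeas : Measurable fun x : ℝ => |x| ^ r := by fun_prop
  refine (hpos.norm.add hneg.norm).mono_fun hmeas.aestronglyMeasurable (ae_of_all _ fun x => ?_)
  dsimp only
  rw [Real.norm_of_nonneg (rpow_nonneg (abs_nonneg x) r), Real.norm_of_nonneg (by positivity)]
  exact abs_rpow_le_norm_rpow_add_norm_neg_rpow x r

lemma abs_one_sub_le_abs_one_sub_rpow {x p : ℝ} (hx : 0 ≤ x) (hp : 1 ≤ p) :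
    |1 - x| ≤ |1 - x ^ p| := by
  rcases le_total x 1 with h | h
  · have hxp : x ^ p ≤ x := by
      rcases hx.eq_or_lt with rfl | hx
      · rw [zero_rpow (by linarith)]
      · simpa using rpow_le_rpow_of_exponent_ge hx h hp
    have hxp1 : x ^ p ≤ 1 := rpow_le_one hx h (by linarith)
    rw [abs_of_nonneg (by linarith), abs_of_nonneg (by linarith)]
    linarith
  · have : x ≤ x ^ p := by simpa using rpow_le_rpow_of_exponent_le h hp
    rw [abs_of_nonpos (by linarith), abs_of_nonpos (by linarith)]
    linarith

lemma spow_nonneg {x : ℝ} (hx : 0 ≤ x) (q : ℝ) : 0 ≤ spow x q := by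
  rcases hx.eq_or_lt with rfl | hx
  · simp [spow]
  · rw [spow, Real.sign_of_pos hx, one_mul]
    positivity

lemma spow_neg (x q : ℝ) : spow (-x) q = -spow x q := by
  rw [spow, spow, Real.sign_neg, abs_neg]
  ring

lemma spow_inv_of_neg {x : ℝ} (hx : x < 0) (q : ℝ) : spow x⁻¹ q = -(|x|⁻¹ ^ q) := by
  rw [spow, Real.sign_of_neg (inv_lt_zero.2 hx), abs_inv]
  ring

lemma strictMonoOn_mul_abs_comp {R : ℝ → ℝ} {a : ℝ} (ha : 0 ≤ a) (hR : MonotoneOn R (Ioi a))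
    (hR0 : ∀ x ∈ Ioi a, 0 < R x) : StrictMonoOn (fun y => y * R |y|) {y | a < |y|} := by
  intro x (hx : a < |x|) y (hy : a < |y|) hxy
  show x * R |x| < y * R |y|
  rcases lt_or_ge 0 x with h0x | hx0
  · have h0y : 0 < y := h0x.trans hxy
    rw [abs_of_pos h0x] at hx ⊢
    rw [abs_of_pos h0y] at hy ⊢
    calc x * R x ≤ x * R y := mul_le_mul_of_nonneg_left (hR hx hy hxy.le) h0x.le
      _ < y * R y := mul_lt_mul_of_pos_right hxy (hR0 _ hy)
  rcases lt_or_ge y 0 with hy0 | h0y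
  · rw [abs_of_neg (hxy.trans hy0)] at hx ⊢
    rw [abs_of_neg hy0] at hy ⊢
    calc x * R (-x) ≤ x * R (-y) := mul_le_mul_of_nonpos_left (hR hy hx (by linarith)) hx0
      _ < y * R (-y) := mul_lt_mul_of_pos_right hxy (hR0 _ hy)
  · have hx' : x < 0 := lt_of_le_of_ne hx0 (by rintro rfl; simp at hx; linarith)
    have hy' : 0 < y := lt_of_le_of_ne h0y (by rintro rfl; simp at hy; linarith)
    nlinarith [hR0 _ hx, hR0 _ hy]

lemma not_strictAntiOn_of_isGreatest_image_Ioo {α β : Type*} [LinearOrder α] [DenselyOrdered α]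
    [Preorder β] {f : α → β} {a b : α} {l : β} (hl : IsGreatest (f '' Ioo a b) l) :
    ¬ StrictAntiOn f (Ioo a b) := by
  intro hf
  obtain ⟨⟨x, hx, rfl⟩, hmax⟩ := hl
  obtain ⟨y, hay, hyx⟩ := exists_between hx.1
  have hy : y ∈ Ioo a b := ⟨hay, hyx.trans hx.2⟩
  exact (hf hy hx hyx).not_ge (hmax ⟨y, hy, rfl⟩)

lemma pos_of_isGreatest_image_Ioo {f : ℝ → ℝ} {P l : ℝ} (hl : IsGreatest (f '' Ioo (-P/2) 0) l) :
    0 < P := by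
  have := nonempty_Ioo.1 hl.nonempty.of_image
  linarith

noncomputable def arcsinpDeriv (p s : ℝ) : ℝ := (1 - |s| ^ p) ^ (-1/p)

noncomputable def arcsinp (p y : ℝ) : ℝ := ∫ s in (0:ℝ)..y, arcsinpDeriv p s

lemma arcsinpDeriv_neg (p s : ℝ) : arcsinpDeriv p (-s) = arcsinpDeriv p s := by
  simp [arcsinpDeriv]

lemma arcsinpDeriv_abs (p s : ℝ) : arcsinpDeriv p |s| = arcsinpDeriv p s := by
  simp [arcsinpDeriv]

lemma measurable_arcsinpDeriv (p : ℝ) : Measurable (arcsinpDeriv p) := by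
  unfold arcsinpDeriv
  fun_prop

lemma arcsinpDeriv_pos {p s : ℝ} (hp : 0 < p) (hs : |s| < 1) : 0 < arcsinpDeriv p s :=
  rpow_pos_of_pos (sub_pos.2 (rpow_lt_one (abs_nonneg s) hs hp)) _

lemma arcsinpDeriv_of_one_lt_abs {p s : ℝ} (hp : 0 < p) (hs : 1 < |s|) :
    arcsinpDeriv p s = (|s| ^ p - 1) ^ (-1/p) * cos (π / p) := by
  have h : 1 - |s| ^ p < 0 := sub_neg.2 (one_lt_rpow hs hp)
  have hlog : log (1 - |s| ^ p) = log (|s| ^ p - 1) := by rw [← log_neg_eq_log, neg_sub]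
  rw [arcsinpDeriv, rpow_def_of_neg h, hlog, ← rpow_def_of_pos (by linarith), ← cos_neg]
  ring_nf

lemma arcsinpDeriv_lt_zero {p s : ℝ} (hp : 0 < p) (hc : cos (π / p) < 0) (hs : 1 < |s|) :
    arcsinpDeriv p s < 0 := by
  rw [arcsinpDeriv_of_one_lt_abs hp hs]
  exact mul_neg_of_pos_of_neg (rpow_pos_of_pos (sub_pos.2 (one_lt_rpow hs hp)) _) hc

lemma arcsinpDeriv_nonneg {p s : ℝ} (hp : 0 < p) (hc : 0 ≤ cos (π / p)) (hs : 1 < |s|) :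
    0 ≤ arcsinpDeriv p s := by
  rw [arcsinpDeriv_of_one_lt_abs hp hs]
  exact mul_nonneg (rpow_pos_of_pos (sub_pos.2 (one_lt_rpow hs hp)) _).le hc

lemma inv_abs_arcsinpDeriv {p s : ℝ} (hp : 0 < p) (hs : 1 < |s|) :
    |arcsinpDeriv p s|⁻¹ = (|s| ^ p - 1) ^ (1/p) * |cos (π / p)|⁻¹ := by
  have h : 0 < |s| ^ p - 1 := sub_pos.2 (one_lt_rpow hs hp)
  rw [arcsinpDeriv_of_one_lt_abs hp hs, abs_mul, abs_of_pos (rpow_pos_of_pos h _), mul_inv,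
    ← rpow_neg h.le, neg_div, neg_neg]

lemma monotoneOn_inv_abs_arcsinpDeriv_rpow {p : ℝ} (hp : 1 < p) :
    MonotoneOn (fun x => |arcsinpDeriv p x|⁻¹ ^ (p - 1)) (Ioi 1) := by
  intro x (hx : 1 < x) y (hy : 1 < y) hxy
  have hx' : 1 < |x| := by rwa [abs_of_pos (by linarith)]
  have hy' : 1 < |y| := by rwa [abs_of_pos (by linarith)]
  dsimp only
  rw [inv_abs_arcsinpDeriv (by linarith) hx', inv_abs_arcsinpDeriv (by linarith) hy']
  have hxp : 0 ≤ |x| ^ p - 1 := (sub_pos.2 (one_lt_rpow hx' (by linarith))).le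
  gcongr

lemma abs_arcsinpDeriv_le {p : ℝ} (hp : 1 ≤ p) (s : ℝ) :
    |arcsinpDeriv p s| ≤ |s - 1| ^ (-1/p) + |s + 1| ^ (-1/p) := by
  have hr : -1/p ≤ 0 := div_nonpos_of_nonpos_of_nonneg (by norm_num) (by linarith)
  have h1 : |arcsinpDeriv p s| ≤ |(1 - |s|)| ^ (-1/p) := by
    rcases eq_or_ne |(1 - |s|)| 0 with h0 | h0
    · have hs : |s| = 1 := by linarith [abs_eq_zero.1 h0]
      simp [arcsinpDeriv, hs, zero_rpow (by positivity : -1/p ≠ 0)]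
    · exact (abs_rpow_le_abs_rpow _ _).trans (rpow_le_rpow_of_nonpos ((abs_nonneg _).lt_of_ne' h0)
        (abs_one_sub_le_abs_one_sub_rpow (abs_nonneg s) hp) hr)
  refine h1.trans ?_
  rcases le_total 0 s with hs | hs
  · rw [abs_of_nonneg hs, abs_sub_comm]
    linarith [rpow_nonneg (abs_nonneg (s + 1)) (-1/p)]
  · rw [abs_of_nonpos hs, sub_neg_eq_add, add_comm]
    linarith [rpow_nonneg (abs_nonneg (s - 1)) (-1/p)]

lemma intervalIntegrable_arcsinpDeriv {p : ℝ} (hp : 1 < p) (a b : ℝ) :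
    IntervalIntegrable (arcsinpDeriv p) volume a b := by
  have hr : -1 < -1/p := by
    rw [neg_div, neg_lt_neg_iff, div_lt_one (by linarith)]
    exact hp
  have hdom : IntervalIntegrable (fun s => |s - 1| ^ (-1/p) + |s + 1| ^ (-1/p)) volume a b := by
    refine IntervalIntegrable.add ?_ ?_
    · simpa using (intervalIntegrable_abs_rpow hr (a - 1) (b - 1)).comp_sub_right 1
    · simpa using (intervalIntegrable_abs_rpow hr (a + 1) (b + 1)).comp_add_right 1
  refine hdom.mono_fun (measurable_arcsinpDeriv p).aestronglyMeasurable (ae_of_all _ fun s => ?_)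
  dsimp only
  rw [Real.norm_eq_abs, Real.norm_of_nonneg (by positivity)]
  exact abs_arcsinpDeriv_le hp.le s

lemma continuousAt_arcsinpDeriv {p s : ℝ} (hp : 0 < p) (hs : |s| ≠ 1) :
    ContinuousAt (arcsinpDeriv p) s := by
  have hne : 1 - |s| ^ p ≠ 0 := by
    rcases hs.lt_or_gt with h | h
    · exact (sub_pos.2 (rpow_lt_one (abs_nonneg s) h hp)).ne'
    · exact (sub_neg.2 (one_lt_rpow h hp)).ne
  exact (continuousAt_const.sub (continuous_abs.continuousAt.rpow_const (Or.inr hp.le))).rpow_const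
    (Or.inl hne)

lemma continuous_arcsinp {p : ℝ} (hp : 1 < p) : Continuous (arcsinp p) :=
  intervalIntegral.continuous_primitive (intervalIntegrable_arcsinpDeriv hp) 0

lemma hasDerivAt_arcsinp {p y : ℝ} (hp : 1 < p) (hy : |y| ≠ 1) :
    HasDerivAt (arcsinp p) (arcsinpDeriv p y) y :=
  intervalIntegral.integral_hasDerivAt_right (intervalIntegrable_arcsinpDeriv hp 0 y)
    (measurable_arcsinpDeriv p).stronglyMeasurable.stronglyMeasurableAtFilter
    (continuousAt_arcsinpDeriv (by linarith) hy)

lemma arcsinp_neg (p y : ℝ) : arcsinp p (-y) = -arcsinp p y := by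
  have h := intervalIntegral.integral_comp_neg (a := 0) (b := y) (arcsinpDeriv p)
  simp only [arcsinpDeriv_neg, neg_zero] at h
  rw [arcsinp, arcsinp, intervalIntegral.integral_symm, ← h]

lemma pip_eq_two_mul_arcsinp_one {p : ℝ} (hp : 1 < p) : pip p = 2 * arcsinp p 1 := by
  have hsplit := intervalIntegral.integral_add_adjacent_intervals
    (intervalIntegrable_arcsinpDeriv hp (-1) 0) (intervalIntegrable_arcsinpDeriv hp 0 1)
  have hleft : ∫ s in (-1:ℝ)..0, arcsinpDeriv p s = arcsinp p 1 := by
    rw [intervalIntegral.integral_symm]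
    show -arcsinp p (-1) = _
    rw [arcsinp_neg, neg_neg]
  show ∫ s in (-1:ℝ)..1, arcsinpDeriv p s = _
  rw [← hsplit, hleft, two_mul]
  rfl

lemma strictMonoOn_arcsinp {p : ℝ} (hp : 1 < p) : StrictMonoOn (arcsinp p) (Icc (-1) 1) := by
  refine strictMonoOn_of_deriv_pos (convex_Icc _ _) (continuous_arcsinp hp).continuousOn
    fun y hy => ?_
  rw [interior_Icc] at hy
  have hy' : |y| < 1 := abs_lt.2 hy
  rw [(hasDerivAt_arcsinp hp hy'.ne).deriv]
  exact arcsinpDeriv_pos (by linarith) hy'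

lemma arcsinp_one_le_abs_arcsinp {p y : ℝ} (hp : 1 < p) (hc : 0 ≤ cos (π / p)) (hy : 1 ≤ |y|) :
    arcsinp p 1 ≤ |arcsinp p y| := by
  have hout : ∀ x ∈ interior (Ici (1:ℝ)), 1 < |x| := fun x hx => by
    rw [interior_Ici] at hx
    rwa [abs_of_pos (by linarith [hx.out])]
  have hmono : MonotoneOn (arcsinp p) (Ici 1) :=
    monotoneOn_of_deriv_nonneg (convex_Ici 1) (continuous_arcsinp hp).continuousOn
      (fun x hx => (hasDerivAt_arcsinp hp (hout x hx).ne').differentiableAt.differentiableWithinAt)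
      fun x hx => by
        rw [(hasDerivAt_arcsinp hp (hout x hx).ne').deriv]
        exact arcsinpDeriv_nonneg (by linarith) hc (hout x hx)
  have h := hmono (mem_Ici.2 le_rfl) hy hy
  rcases abs_choice y with hy' | hy' <;> rw [hy'] at h
  · exact h.trans (le_abs_self _)
  · exact h.trans (by rw [arcsinp_neg]; exact neg_le_abs _)

namespace IsPTrig

variable {p : ℝ} {sinp cosp : ℝ → ℝ}

lemma hasDerivAt_sinp (h : IsPTrig p sinp cosp) (t : ℝ) : HasDerivAt sinp (cosp t) t :=
  h.2.2.2 t

lemma continuous_sinp (h : IsPTrig p sinp cosp) : Continuous sinp :=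
  continuous_iff_continuousAt.2 fun t => (h.hasDerivAt_sinp t).continuousAt

lemma arcsinp_sinp (h : IsPTrig p sinp cosp) {t : ℝ} (ht : t ∈ Icc (-(pip p)/2) (pip p/2)) :
    arcsinp p (sinp t) = t :=
  (h.1 t ht).symm

lemma sinp_reflect (h : IsPTrig p sinp cosp) {t : ℝ} (ht : t ∈ Icc (pip p/2) (3 * pip p/2)) :
    sinp t = sinp (pip p - t) :=
  h.2.1 t ht

lemma periodic_sinp (h : IsPTrig p sinp cosp) : Function.Periodic sinp (2 * pip p) :=
  h.2.2.1

lemma periodic_cosp (h : IsPTrig p sinp cosp) : Function.Periodic cosp (2 * pip p) := fun t => by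
  have hd := (h.hasDerivAt_sinp (t + 2 * pip p)).comp_add_const t (2 * pip p)
  rw [h.periodic_sinp.funext] at hd
  exact hd.unique (h.hasDerivAt_sinp t)

lemma cosp_reflect (h : IsPTrig p sinp cosp) (hP : 0 < pip p) {t : ℝ}
    (ht : t ∈ Icc (pip p/2) (3 * pip p/2)) : cosp t = -cosp (pip p - t) := by
  have hd : HasDerivWithinAt sinp (-cosp (pip p - t)) (Icc (pip p/2) (3 * pip p/2)) t :=
    ((h.hasDerivAt_sinp (pip p - t)).comp_const_sub (pip p) t).hasDerivWithinAt.congr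
      (fun s hs => h.sinp_reflect hs) (h.sinp_reflect ht)
  exact (uniqueDiffOn_Icc (by linarith) t ht).eq_deriv _ (h.hasDerivAt_sinp t).hasDerivWithinAt hd

lemma periodic_spow_cosp_mul_sinp (h : IsPTrig p sinp cosp) :
    Function.Periodic (fun t => spow (cosp t) (p - 1) * sinp t) (2 * pip p) := fun t => by
  simp only [h.periodic_cosp t, h.periodic_sinp t]

lemma spow_cosp_mul_sinp_reflect (h : IsPTrig p sinp cosp) (hP : 0 < pip p) {t : ℝ}
    (ht : t ∈ Icc (pip p/2) (3 * pip p/2)) :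
    spow (cosp t) (p - 1) * sinp t = -(spow (cosp (pip p - t)) (p - 1) * sinp (pip p - t)) := by
  rw [h.cosp_reflect hP ht, spow_neg, ← h.sinp_reflect ht]
  ring

lemma abs_sinp_ne_one (h : IsPTrig p sinp cosp) (hp : 1 < p) {t : ℝ}
    (ht : t ∈ Ioo (-(pip p)/2) (pip p/2)) : |sinp t| ≠ 1 := by
  intro h1
  have hpip := pip_eq_two_mul_arcsinp_one hp
  have ht' := h.arcsinp_sinp (Ioo_subset_Icc_self ht)
  rcases (abs_eq zero_le_one).1 h1 with h1 | h1 <;> rw [h1] at ht'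
  · linarith [ht.2]
  · rw [arcsinp_neg] at ht'
    linarith [ht.1]

lemma cosp_eq_inv (h : IsPTrig p sinp cosp) (hp : 1 < p) {t : ℝ}
    (ht : t ∈ Ioo (-(pip p)/2) (pip p/2)) : cosp t = (arcsinpDeriv p (sinp t))⁻¹ := by
  have hcomp := (hasDerivAt_arcsinp hp (h.abs_sinp_ne_one hp ht)).comp t (h.hasDerivAt_sinp t)
  have hid : HasDerivAt (fun s => arcsinp p (sinp s)) 1 t :=
    (hasDerivAt_id t).congr_of_eventuallyEq (eventually_of_mem (isOpen_Ioo.mem_nhds ht)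
      fun s hs => h.arcsinp_sinp (Ioo_subset_Icc_self hs))
  exact eq_inv_of_mul_eq_one_right (hcomp.unique hid)

lemma abs_sinp_lt_one_iff (h : IsPTrig p sinp cosp) (hp : 1 < p) {s t : ℝ}
    (hs : s ∈ Ioo (-(pip p)/2) (pip p/2)) (ht : t ∈ Ioo (-(pip p)/2) (pip p/2)) :
    |sinp s| < 1 ↔ |sinp t| < 1 := by
  have hcont := (continuous_abs.comp h.continuous_sinp).continuousOn
    (s := Ioo (-(pip p)/2) (pip p/2))
  constructor <;> intro hlt <;> by_contra! hge
  · obtain ⟨u, hu, hu1⟩ := isPreconnected_Ioo.intermediate_value hs ht hcont ⟨hlt.le, hge⟩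
    exact h.abs_sinp_ne_one hp hu hu1
  · obtain ⟨u, hu, hu1⟩ := isPreconnected_Ioo.intermediate_value ht hs hcont ⟨hlt.le, hge⟩
    exact h.abs_sinp_ne_one hp hu hu1

lemma strictAntiOn_neg_spow_cosp_mul_sinp (h : IsPTrig p sinp cosp) (hp : 1 < p)
    (hc : cos (π / p) < 0) (hout : ∀ t ∈ Ioo (-(pip p)/2) (pip p/2), 1 < |sinp t|) :
    StrictAntiOn (fun t => -(spow (cosp t) (p - 1) * sinp t)) (Ioo (-(pip p)/2) (pip p/2)) := by
  have hderiv : ∀ t ∈ Ioo (-(pip p)/2) (pip p/2), arcsinpDeriv p (sinp t) < 0 :=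
    fun t ht => arcsinpDeriv_lt_zero (by linarith) hc (hout t ht)
  have hanti : StrictAntiOn sinp (Ioo (-(pip p)/2) (pip p/2)) := by
    refine strictAntiOn_of_deriv_neg (convex_Ioo _ _) h.continuous_sinp.continuousOn fun t ht => ?_
    rw [interior_Ioo] at ht
    rw [(h.hasDerivAt_sinp t).deriv, h.cosp_eq_inv hp ht]
    exact inv_lt_zero.2 (hderiv t ht)
  have hQ := strictMonoOn_mul_abs_comp zero_le_one (monotoneOn_inv_abs_arcsinpDeriv_rpow hp)
    fun x (hx : 1 < x) => rpow_pos_of_pos (inv_pos.2 (abs_pos.2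
      (arcsinpDeriv_lt_zero (by linarith) hc (by rwa [abs_of_pos (by linarith)])).ne)) _
  refine (hQ.comp_strictAntiOn hanti hout).congr fun t ht => ?_
  simp only [Function.comp_apply, arcsinpDeriv_abs]
  rw [h.cosp_eq_inv hp ht, spow_inv_of_neg (hderiv t ht)]
  ring

lemma abs_sinp_lt_one (h : IsPTrig p sinp cosp) (hp : 1 < p) {l : ℝ}
    (hl : IsGreatest ((fun ψ => -(spow (cosp ψ) (p - 1) * sinp ψ)) '' Ioo (-(pip p)/2) 0) l)
    {t : ℝ} (ht : t ∈ Ioo (-(pip p)/2) (pip p/2)) : |sinp t| < 1 := by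
  have hP := pos_of_isGreatest_image_Ioo hl
  have h0 : (0:ℝ) ∈ Ioo (-(pip p)/2) (pip p/2) := ⟨by linarith, by linarith⟩
  refine (h.abs_sinp_lt_one_iff hp h0 ht).1 ?_
  by_contra! hge
  rcases le_or_gt 0 (cos (π / p)) with hc | hc
  · have h1 := arcsinp_one_le_abs_arcsinp hp hc hge
    rw [h.arcsinp_sinp (Ioo_subset_Icc_self h0), abs_zero] at h1
    linarith [pip_eq_two_mul_arcsinp_one hp]
  · have hout : ∀ s ∈ Ioo (-(pip p)/2) (pip p/2), 1 < |sinp s| := fun s hs =>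
      (not_lt.1 (mt (h.abs_sinp_lt_one_iff hp hs h0).1 hge.not_gt)).lt_of_ne
        (h.abs_sinp_ne_one hp hs).symm
    exact not_strictAntiOn_of_isGreatest_image_Ioo hl
      ((h.strictAntiOn_neg_spow_cosp_mul_sinp hp hc hout).mono (Ioo_subset_Ioo_right (by linarith)))

lemma sinp_neg (h : IsPTrig p sinp cosp) (hp : 1 < p)
    (hin : ∀ t ∈ Ioo (-(pip p)/2) (pip p/2), |sinp t| < 1) {t : ℝ}
    (ht : t ∈ Ioo (-(pip p)/2) (pip p/2)) : sinp (-t) = -sinp t := by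
  have hnt : -t ∈ Ioo (-(pip p)/2) (pip p/2) := ⟨by linarith [ht.2], by linarith [ht.1]⟩
  have hmem : ∀ y : ℝ, |y| < 1 → y ∈ Icc (-1) 1 := fun y hy => abs_le.1 hy.le
  refine (strictMonoOn_arcsinp hp).injOn (hmem _ (hin _ hnt))
    (hmem _ (by rw [abs_neg]; exact hin t ht)) ?_
  rw [arcsinp_neg, h.arcsinp_sinp (Ioo_subset_Icc_self hnt),
    h.arcsinp_sinp (Ioo_subset_Icc_self ht)]

lemma cosp_neg (h : IsPTrig p sinp cosp) (hp : 1 < p)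
    (hin : ∀ t ∈ Ioo (-(pip p)/2) (pip p/2), |sinp t| < 1) {t : ℝ}
    (ht : t ∈ Ioo (-(pip p)/2) (pip p/2)) : cosp (-t) = cosp t := by
  have hnt : -t ∈ Ioo (-(pip p)/2) (pip p/2) := ⟨by linarith [ht.2], by linarith [ht.1]⟩
  rw [h.cosp_eq_inv hp hnt, h.cosp_eq_inv hp ht, h.sinp_neg hp hin ht, arcsinpDeriv_neg]

lemma cosp_pos (h : IsPTrig p sinp cosp) (hp : 1 < p)
    (hin : ∀ t ∈ Ioo (-(pip p)/2) (pip p/2), |sinp t| < 1) {t : ℝ}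
    (ht : t ∈ Ioo (-(pip p)/2) (pip p/2)) : 0 < cosp t := by
  rw [h.cosp_eq_inv hp ht]
  exact inv_pos.2 (arcsinpDeriv_pos (by linarith) (hin t ht))

lemma strictMonoOn_sinp (h : IsPTrig p sinp cosp) (hp : 1 < p)
    (hin : ∀ t ∈ Ioo (-(pip p)/2) (pip p/2), |sinp t| < 1) :
    StrictMonoOn sinp (Ioo (-(pip p)/2) (pip p/2)) := by
  refine strictMonoOn_of_deriv_pos (convex_Ioo _ _) h.continuous_sinp.continuousOn fun t ht => ?_
  rw [interior_Ioo] at ht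
  rw [(h.hasDerivAt_sinp t).deriv]
  exact h.cosp_pos hp hin ht

lemma abs_spow_cosp_mul_sinp_le (h : IsPTrig p sinp cosp) (hp : 1 < p) {l : ℝ}
    (hl : IsGreatest ((fun ψ => -(spow (cosp ψ) (p - 1) * sinp ψ)) '' Ioo (-(pip p)/2) 0) l)
    {t : ℝ} (ht : t ∈ Ioo (-(pip p)/2) (pip p/2)) : |spow (cosp t) (p - 1) * sinp t| ≤ l := by
  have hP := pos_of_isGreatest_image_Ioo hl
  have hin : ∀ s ∈ Ioo (-(pip p)/2) (pip p/2), |sinp s| < 1 :=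
    fun s hs => h.abs_sinp_lt_one hp hl hs
  have h0 : (0:ℝ) ∈ Ioo (-(pip p)/2) (pip p/2) := ⟨by linarith, by linarith⟩
  have hsinp0 : sinp 0 = 0 := by
    have := h.sinp_neg hp hin h0
    rw [neg_zero] at this
    linarith
  have hleft : ∀ s ∈ Ioo (-(pip p)/2) 0, |spow (cosp s) (p - 1) * sinp s| ≤ l := by
    intro s hs
    have hsJ : s ∈ Ioo (-(pip p)/2) (pip p/2) := ⟨hs.1, by linarith [hs.2]⟩
    have hneg : sinp s < 0 := hsinp0 ▸ h.strictMonoOn_sinp hp hin hsJ h0 hs.2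
    rw [abs_of_nonpos (mul_nonpos_of_nonneg_of_nonpos
      (spow_nonneg (h.cosp_pos hp hin hsJ).le _) hneg.le)]
    exact hl.2 ⟨s, hs, rfl⟩
  rcases lt_trichotomy t 0 with ht0 | rfl | ht0
  · exact hleft t ⟨ht.1, ht0⟩
  · obtain ⟨ψ, hψ, -⟩ := hl.1
    rw [hsinp0, mul_zero, abs_zero]
    exact (abs_nonneg _).trans (hleft ψ hψ)
  · have hnt : -t ∈ Ioo (-(pip p)/2) 0 := ⟨by linarith [ht.2], by linarith⟩
    have := hleft (-t) hnt
    rwa [h.cosp_neg hp hin ht, h.sinp_neg hp hin ht, mul_neg, abs_neg] at this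

lemma neg_le_spow_cosp_mul_sinp (h : IsPTrig p sinp cosp) (hp : 1 < p) {l : ℝ}
    (hl : IsGreatest ((fun ψ => -(spow (cosp ψ) (p - 1) * sinp ψ)) '' Ioo (-(pip p)/2) 0) l)
    (ψ : ℝ) : -l ≤ spow (cosp ψ) (p - 1) * sinp ψ := by
  have hP := pos_of_isGreatest_image_Ioo hl
  have hl0 : 0 ≤ l :=
    (abs_nonneg _).trans (h.abs_spow_cosp_mul_sinp_le hp hl (t := 0) ⟨by linarith, by linarith⟩)
  obtain ⟨m, hm, hψm⟩ := h.periodic_spow_cosp_mul_sinp.exists_mem_Ico (by linarith) ψ (-(pip p)/2)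
  rw [hψm]
  -- at the endpoints `±π_p/2` the reflection symmetry forces the product to vanish
  rcases hm.1.eq_or_lt with rfl | hm1
  · have hrefl := h.spow_cosp_mul_sinp_reflect hP (t := 3 * pip p/2) ⟨by linarith, le_rfl⟩
    have hper := h.periodic_spow_cosp_mul_sinp (-(pip p)/2)
    simp only [show -(pip p)/2 + 2 * pip p = 3 * pip p/2 by ring] at hper
    rw [show pip p - 3 * pip p/2 = -(pip p)/2 by ring, hper] at hrefl
    linarith
  rcases lt_or_ge m (pip p/2) with hm2 | hm2
  · exact neg_le_of_abs_le (h.abs_spow_cosp_mul_sinp_le hp hl ⟨hm1, hm2⟩)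
  rw [h.spow_cosp_mul_sinp_reflect hP ⟨hm2, by linarith [hm.2]⟩, neg_le_neg_iff]
  rcases hm2.eq_or_lt with rfl | hm2
  · have hrefl := h.spow_cosp_mul_sinp_reflect hP (t := pip p/2) ⟨le_rfl, by linarith⟩
    rw [sub_half] at hrefl ⊢
    linarith
  · exact le_of_abs_le (h.abs_spow_cosp_mul_sinp_le hp hl ⟨by linarith [hm.2], by linarith⟩)

end IsPTrig

lemma add_mul_le_of_hasDerivAt_ge {φ φ' : ℝ → ℝ} {ε : ℝ} (hφ : ∀ t, HasDerivAt φ (φ' t) t)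
    (hε : ∀ t, ε ≤ φ' t) {t : ℝ} (ht : 0 ≤ t) : φ 0 + ε * t ≤ φ t := by
  have hmono := monotone_of_hasDerivAt_nonneg (fun s => (hφ s).sub ((hasDerivAt_id s).const_mul ε))
    fun s => by simpa using hε s
  have := hmono ht
  simp only [Pi.sub_apply, id, mul_zero, sub_zero] at this
  linarith

lemma tendsto_atTop_of_hasDerivAt_ge {φ φ' : ℝ → ℝ} {ε : ℝ} (hε0 : 0 < ε)
    (hφ : ∀ t, HasDerivAt φ (φ' t) t) (hε : ∀ t, ε ≤ φ' t) : Tendsto φ atTop atTop :=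
  tendsto_atTop_mono' _
    ((eventually_ge_atTop 0).mono fun _ ht => add_mul_le_of_hasDerivAt_ge hφ hε ht)
    (tendsto_atTop_add_const_left _ _ (tendsto_id.const_mul_atTop hε0))

theorem stmt8_general (p n k α : ℝ) (hp : 1 < p) (hn : 2 ≤ n)
    (sinp cosp : ℝ → ℝ) (htrig : IsPTrig p sinp cosp)
    (l : ℝ)
    (hl : IsGreatest ((fun ψ => -(spow (cosp ψ) (p-1) * sinp ψ)) ''
            Set.Ioo (-(pip p)/2) 0) l)
    (hαbig : (n-1) * l * Real.sqrt (-k) / (p-1) < α)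
    (φ : ℝ → ℝ) (hφ0 : φ 0 = -(pip p)/2)
    (hφ : ∀ t, HasDerivAt φ
      (α + (n-1) * Real.sqrt (-k) / (p-1) * spow (cosp (φ t)) (p-1) * sinp (φ t)) t) :
    ∃ ε > 0,
      (∀ t : ℝ, ε ≤ α + (n-1) * Real.sqrt (-k) / (p-1)
          * spow (cosp (φ t)) (p-1) * sinp (φ t)) ∧
      StrictMono φ ∧
      Filter.Tendsto φ Filter.atTop Filter.atTop ∧
      ∃ b : ℝ, φ b = pip p / 2 ∧ b ≤ pip p / ε ∧ ∀ s, φ s = pip p / 2 → b ≤ s := by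
  have hP := pos_of_isGreatest_image_Ioo hl
  have hC : 0 ≤ (n-1) * √(-k) / (p-1) :=
    div_nonneg (mul_nonneg (by linarith) (sqrt_nonneg _)) (by linarith)
  set ε := α - (n-1) * √(-k) / (p-1) * l
  have hε : 0 < ε := by
    have : (n-1) * l * √(-k) / (p-1) = (n-1) * √(-k) / (p-1) * l := by ring
    linarith
  have hbound : ∀ t, ε ≤ α + (n-1) * √(-k) / (p-1) * spow (cosp (φ t)) (p-1) * sinp (φ t) :=
    fun t => by
      have := mul_le_mul_of_nonneg_left (htrig.neg_le_spow_cosp_mul_sinp hp hl (φ t)) hC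
      linarith
  have hmono : StrictMono φ := strictMono_of_hasDerivAt_pos hφ fun t => hε.trans_le (hbound t)
  have hend : pip p / 2 ≤ φ (pip p / ε) := by
    have := add_mul_le_of_hasDerivAt_ge hφ hbound (t := pip p / ε) (by positivity)
    rw [hφ0, mul_div_cancel₀ _ hε.ne'] at this
    linarith
  obtain ⟨b, hb, hφb⟩ := intermediate_value_Icc (by positivity)
    (fun t _ => (hφ t).continuousAt.continuousWithinAt)
    ⟨by linarith, hend⟩
  exact ⟨ε, hε, hbound, hmono, tendsto_atTop_of_hasDerivAt_ge hε hφ hbound, b, hφb, hb.2,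
    fun s hs => (hmono.injective (hs.trans hφb.symm)).ge⟩

/-- if `α > ᾱ = (n-1)ℓ√(-k)/(p-1)` (with `-ℓ` the minimum of
`cos_p^{(p-1)}·sin_p` on `(-π_p/2,0)`), then for the solution of
`φ' = α + ((n-1)√(-k)/(p-1))·cos_p^{(p-1)}(φ)·sin_p(φ)`, `φ(0) = -π_p/2`,
there is `ε > 0` with `φ' ≥ ε` everywhere; hence `φ` is strictly increasing,
tends to `+∞`, and the first time `b` with `φ(b) = π_p/2` satisfies `b ≤ π_p/ε`. -/
theorem stmt8 (p n k α : ℝ) (hp : 1 < p) (hn : 2 ≤ n) (hk : k < 0)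
    (sinp cosp : ℝ → ℝ) (htrig : IsPTrig p sinp cosp)
    (l : ℝ)
    (hl : IsGreatest ((fun ψ => -(spow (cosp ψ) (p-1) * sinp ψ)) ''
            Set.Ioo (-(pip p)/2) 0) l)
    (hαbig : (n-1) * l * Real.sqrt (-k) / (p-1) < α)
    (φ : ℝ → ℝ) (hφ0 : φ 0 = -(pip p)/2)
    (hφ : ∀ t, HasDerivAt φ
      (α + (n-1) * Real.sqrt (-k) / (p-1) * spow (cosp (φ t)) (p-1) * sinp (φ t)) t) :
    ∃ ε > 0,
      (∀ t : ℝ, ε ≤ α + (n-1) * Real.sqrt (-k) / (p-1)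
          * spow (cosp (φ t)) (p-1) * sinp (φ t)) ∧
      StrictMono φ ∧
      Filter.Tendsto φ Filter.atTop Filter.atTop ∧
      ∃ b : ℝ, φ b = pip p / 2 ∧ b ≤ pip p / ε ∧ ∀ s, φ s = pip p / 2 → b ≤ s :=
  stmt8_general p n k α hp hn sinp cosp htrig l hl hαbig φ hφ0 hφ
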